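/- Let X be the SE₂(3)-embedding of (R, v, p) and X̄ the SE₂(3)-embedding of (R̄, v̄, p̄), with R an orthogonal 3×3 real matrix (RᵀR = I). Let ξ = (ξ_p, ξ_v, ξ_R) ∈ ℝ³×ℝ³×ℝ³ with ξ_R ≠ 0 and θ = ‖ξ_R‖, and suppose X⁻¹X̄ = exp(ξ∧). Then p̄ − p = R·(J_ℓ(ξ_R) ξ_p), where J_ℓ(ξ_R) = I + ((1 − cos θ)/θ²)[ξ_R]× + ((θ − sin θ)/θ³)([ξ_R]×)², and consequently ‖p̄ − p‖ ≤ ‖ξ_p‖ in the Euclidean norm. -/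

import Mathlib

noncomputable section
open Matrix

/-- ℝ³ with the Euclidean norm. -/
abbrev V3 := EuclideanSpace ℝ (Fin 3)

/-- The skew-symmetric cross-product matrix `[w]×`. -/
def skew (w : V3) : Matrix (Fin 3) (Fin 3) ℝ :=
  !![0, -w 2, w 1;
     w 2, 0, -w 0;
     -w 1, w 0, 0]

/-- The wedge map of `ξ = (ξ_p, ξ_v, ξ_R)` into `𝔰𝔢₂(3) ⊂ ℝ^{5×5}`. -/
def wedge (ξp ξv ξR : V3) : Matrix (Fin 5) (Fin 5) ℝ :=
  !![0, -ξR 2, ξR 1, ξv 0, ξp 0;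
     ξR 2, 0, -ξR 0, ξv 1, ξp 1;
     -ξR 1, ξR 0, 0, ξv 2, ξp 2;
     0, 0, 0, 0, 0;
     0, 0, 0, 0, 0]

/-- The SE₂(3)-embedding `[R v p; 0 1 0; 0 0 1]`. -/
def se23 (R : Matrix (Fin 3) (Fin 3) ℝ) (v p : V3) : Matrix (Fin 5) (Fin 5) ℝ :=
  !![R 0 0, R 0 1, R 0 2, v 0, p 0;
     R 1 0, R 1 1, R 1 2, v 1, p 1;
     R 2 0, R 2 1, R 2 2, v 2, p 2;
     0, 0, 0, 1, 0;
     0, 0, 0, 0, 1]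

/-- The constant matrix `C`: a single 1 in row 4, column 5. -/
def Cmat : Matrix (Fin 5) (Fin 5) ℝ :=
  !![0, 0, 0, 0, 0;
     0, 0, 0, 0, 0;
     0, 0, 0, 0, 0;
     0, 0, 0, 0, 1;
     0, 0, 0, 0, 0]

/-- The inverse-square gravity field `g(x) = -μ‖x‖⁻³ x`. -/
def grav (μ : ℝ) (x : V3) : V3 := (-(μ / ‖x‖ ^ 3)) • x

/-- The cross product on ℝ³. -/
def cross3 (a b : V3) : V3 :=
  WithLp.toLp 2 ![a 1 * b 2 - a 2 * b 1, a 2 * b 0 - a 0 * b 2, a 0 * b 1 - a 1 * b 0]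

/-- The SO(3) left Jacobian. -/
def Jl (φ : V3) : Matrix (Fin 3) (Fin 3) ℝ :=
  1 + ((1 - Real.cos ‖φ‖) / ‖φ‖ ^ 2) • skew φ
    + ((‖φ‖ - Real.sin ‖φ‖) / ‖φ‖ ^ 3) • (skew φ ^ 2)

/-- The SO(3) inverse right Jacobian. -/
def Jrinv (φ : V3) : Matrix (Fin 3) (Fin 3) ℝ :=
  1 + (1 / 2 : ℝ) • skew φ
    + ((‖φ‖ ^ 2)⁻¹ - (1 + Real.cos ‖φ‖) / (2 * ‖φ‖ * Real.sin ‖φ‖)) • (skew φ ^ 2)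

/-!
Reading off the position block (rows 1–3 of column 5) turns `X⁻¹X̄` into `Rᵀ(p̄ − p)`. Since
`(ξ∧)ⁿ⁺¹` has position block `[ξ_R]×ⁿ ξ_p`, it turns `exp(ξ∧)` into
`∑ [ξ_R]×ⁿ ξ_p / (n+1)!`, and `[ξ_R]×³ = −θ²[ξ_R]×` sums this series to `J_ℓ(ξ_R) ξ_p`.

For the bound, `R` is an isometry. Write `J_ℓ(u) x = x + a (u × x) + b (u × (u × x))` with
`θ = ‖u‖`; the orthogonality of `u × x` to `x` and to `u × (u × x)` gives
`‖J_ℓ(u) x‖² = ‖x‖² − (2b − a² − θ²b²) ‖u × x‖²`, and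
`2b − a² − θ²b² = (θ² − 2 + 2 cos θ) / θ⁴ ≥ 0` because `cos θ ≥ 1 − θ²/2`.
-/

open scoped Nat

theorem Real.hasSum_one_sub_cos_div_sq {x : ℝ} (hx : x ≠ 0) :
    HasSum (fun k : ℕ => (-x ^ 2) ^ k / (2 * k + 2)!) ((1 - Real.cos x) / x ^ 2) := by
  have h := ((hasSum_nat_add_iff' 1).mpr (Real.hasSum_cos x)).neg.div_const (x ^ 2)
  convert h using 1
  · rfl
  · funext k
    rw [neg_pow, show 2 * (k + 1) = 2 * k + 2 by ring]
    field_simp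
    ring
  · simp

theorem Real.hasSum_sub_sin_div_cube {x : ℝ} (hx : x ≠ 0) :
    HasSum (fun k : ℕ => (-x ^ 2) ^ k / (2 * k + 3)!) ((x - Real.sin x) / x ^ 3) := by
  have h := ((hasSum_nat_add_iff' 1).mpr (Real.hasSum_sin x)).neg.div_const (x ^ 3)
  convert h using 1
  · rfl
  · funext k
    rw [neg_pow, show 2 * (k + 1) + 1 = 2 * k + 3 by ring]
    field_simp
    ring
  · simp

theorem EuclideanSpace.real_norm_sq_eq_dotProduct {ι : Type*} [Fintype ι]
    (x : EuclideanSpace ℝ ι) : ‖x‖ ^ 2 = x.ofLp ⬝ᵥ x.ofLp := by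
  rw [← real_inner_self_eq_norm_sq, EuclideanSpace.inner_eq_star_dotProduct, star_trivial]

theorem Matrix.norm_toEuclideanLin_of_transpose_mul_self {n : Type*} [Fintype n] [DecidableEq n]
    {R : Matrix n n ℝ} (hR : Rᵀ * R = 1) (x : EuclideanSpace ℝ n) :
    ‖toEuclideanLin R x‖ = ‖x‖ := by
  rw [← sq_eq_sq₀ (norm_nonneg _) (norm_nonneg _), EuclideanSpace.real_norm_sq_eq_dotProduct,
    EuclideanSpace.real_norm_sq_eq_dotProduct, ofLp_toLpLin, toLin'_apply, dotProduct_mulVec,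
    ← mulVec_transpose, mulVec_mulVec, hR, one_mulVec]

theorem Matrix.hasSum_exp {m : Type*} [Fintype m] [DecidableEq m] (A : Matrix m m ℝ) :
    HasSum (fun n : ℕ => (n !⁻¹ : ℝ) • A ^ n) (NormedSpace.exp A) := by
  let _ := Matrix.linftyOpNormedRing (n := m) (α := ℝ)
  let _ := Matrix.linftyOpNormedAlgebra (n := m) (R := ℝ) (α := ℝ)
  exact NormedSpace.exp_series_hasSum_exp' A

theorem dotProduct_self_add_smul_cross_add_smul_cross_cross (u x : Fin 3 → ℝ) (a b : ℝ) :
    (x + a • u ⨯₃ x + b • u ⨯₃ (u ⨯₃ x)) ⬝ᵥ (x + a • u ⨯₃ x + b • u ⨯₃ (u ⨯₃ x))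
      = x ⬝ᵥ x - (2 * b - a ^ 2 - b ^ 2 * (u ⬝ᵥ u)) * (u ⨯₃ x ⬝ᵥ u ⨯₃ x) := by
  simp only [cross_apply, vec3_dotProduct, Pi.add_apply, Pi.smul_apply, smul_eq_mul,
    cons_val_zero, cons_val_one, cons_val]
  ring

theorem skew_mulVec (u : V3) (x : Fin 3 → ℝ) : skew u *ᵥ x = u.ofLp ⨯₃ x := by
  ext i
  fin_cases i <;> simp [skew, cross_apply, mulVec, dotProduct, Fin.sum_univ_three] <;> ring

theorem skew_zero : skew 0 = 0 := by
  ext i j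
  fin_cases i <;> fin_cases j <;> simp [skew]

theorem skew_pow_three (u : V3) : skew u ^ 3 = (-‖u‖ ^ 2) • skew u := by
  refine toLin'.injective (LinearMap.ext fun x => ?_)
  rw [EuclideanSpace.real_norm_sq_eq_dotProduct]
  simp [pow_succ, skew_mulVec, cross_cross_eq_smul_sub_smul']

theorem skew_pow_two_mul_add_one (u : V3) (k : ℕ) :
    skew u ^ (2 * k + 1) = (-‖u‖ ^ 2) ^ k • skew u := by
  induction k with
  | zero => simp
  | succ k ih =>
    rw [show 2 * (k + 1) + 1 = 2 + (2 * k + 1) by ring, pow_add, ih, Matrix.mul_smul, ← pow_succ,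
      skew_pow_three, smul_smul, ← pow_succ]

theorem skew_pow_two_mul_add_two (u : V3) (k : ℕ) :
    skew u ^ (2 * k + 2) = (-‖u‖ ^ 2) ^ k • skew u ^ 2 := by
  rw [pow_succ, skew_pow_two_mul_add_one, Matrix.smul_mul, ← sq]

theorem hasSum_Jl (u : V3) :
    HasSum (fun n : ℕ => ((n + 1)! : ℝ)⁻¹ • skew u ^ n) (Jl u) := by
  rcases eq_or_ne u 0 with rfl | hu
  · have h := hasSum_single (f := fun n : ℕ => ((n + 1)! : ℝ)⁻¹ • skew 0 ^ n) 0
      fun n hn => by simp [skew_zero, zero_pow hn]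
    convert h using 1
    -- both coefficients of `Jl 0` divide by `‖0‖ = 0`, so `Jl 0 = 1`
    simp [Jl, skew_zero]
  have hθ : ‖u‖ ≠ 0 := norm_ne_zero_iff.mpr hu
  have hodd : HasSum (fun k : ℕ => ((2 * k + 1 + 1)! : ℝ)⁻¹ • skew u ^ (2 * k + 1))
      (((1 - Real.cos ‖u‖) / ‖u‖ ^ 2) • skew u) := by
    convert (Real.hasSum_one_sub_cos_div_sq hθ).smul_const (skew u) using 2 with k
    rw [skew_pow_two_mul_add_one, smul_smul, inv_mul_eq_div, add_assoc]
  have heven : HasSum (fun k : ℕ => ((2 * (k + 1) + 1)! : ℝ)⁻¹ • skew u ^ (2 * (k + 1)))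
      (((‖u‖ - Real.sin ‖u‖) / ‖u‖ ^ 3) • skew u ^ 2) := by
    convert (Real.hasSum_sub_sin_div_cube hθ).smul_const (skew u ^ 2) using 2 with k
    rw [mul_add_one, skew_pow_two_mul_add_two, smul_smul, inv_mul_eq_div, add_assoc]
  have h := HasSum.even_add_odd (f := fun n : ℕ => ((n + 1)! : ℝ)⁻¹ • skew u ^ n)
    (HasSum.zero_add (f := fun k => ((2 * k + 1)! : ℝ)⁻¹ • skew u ^ (2 * k)) heven) hodd
  convert h using 1
  simp only [Jl, mul_zero, zero_add, Nat.factorial_one, Nat.cast_one, inv_one, pow_zero, one_smul]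
  abel

theorem Jl_mulVec (u : V3) (x : Fin 3 → ℝ) :
    Jl u *ᵥ x = x + ((1 - Real.cos ‖u‖) / ‖u‖ ^ 2) • u.ofLp ⨯₃ x
      + ((‖u‖ - Real.sin ‖u‖) / ‖u‖ ^ 3) • u.ofLp ⨯₃ (u.ofLp ⨯₃ x) := by
  simp [Jl, add_mulVec, smul_mulVec, sq, ← mulVec_mulVec, skew_mulVec]

theorem norm_toEuclideanLin_Jl_le (u x : V3) : ‖toEuclideanLin (Jl u) x‖ ≤ ‖x‖ := by
  set θ := ‖u‖
  have hcoeff : 0 ≤ 2 * ((θ - Real.sin θ) / θ ^ 3) - ((1 - Real.cos θ) / θ ^ 2) ^ 2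
      - ((θ - Real.sin θ) / θ ^ 3) ^ 2 * θ ^ 2 := by
    rcases eq_or_ne θ 0 with h | h
    · simp [h]
    have key : 2 * ((θ - Real.sin θ) / θ ^ 3) - ((1 - Real.cos θ) / θ ^ 2) ^ 2
        - ((θ - Real.sin θ) / θ ^ 3) ^ 2 * θ ^ 2 = (θ ^ 2 - 2 + 2 * Real.cos θ) / θ ^ 4 := by
      field_simp
      linear_combination -Real.sin_sq_add_cos_sq θ
    rw [key]
    have := Real.one_sub_sq_div_two_le_cos (x := θ)
    exact div_nonneg (by linarith) (by positivity)
  rw [← sq_le_sq₀ (norm_nonneg _) (norm_nonneg _), EuclideanSpace.real_norm_sq_eq_dotProduct,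
    EuclideanSpace.real_norm_sq_eq_dotProduct, ofLp_toLpLin, toLin'_apply, Jl_mulVec,
    dotProduct_self_add_smul_cross_add_smul_cross_cross,
    ← EuclideanSpace.real_norm_sq_eq_dotProduct u]
  exact sub_le_self _ (mul_nonneg hcoeff (dotProduct_self_star_nonneg _))

theorem se23_mul (R₁ R₂ : Matrix (Fin 3) (Fin 3) ℝ) (v₁ p₁ v₂ p₂ : V3) :
    se23 R₁ v₁ p₁ * se23 R₂ v₂ p₂
      = se23 (R₁ * R₂) (toEuclideanLin R₁ v₂ + v₁) (toEuclideanLin R₁ p₂ + p₁) := by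
  ext i j
  fin_cases i <;> fin_cases j <;>
    simp [se23, mul_apply, Fin.sum_univ_succ, mulVec, dotProduct, add_assoc]

theorem se23_one_zero_zero : se23 1 0 0 = 1 := by
  ext i j
  fin_cases i <;> fin_cases j <;> simp [se23]

theorem inv_se23 {R : Matrix (Fin 3) (Fin 3) ℝ} (hR : Rᵀ * R = 1) (v p : V3) :
    (se23 R v p)⁻¹ = se23 Rᵀ (-toEuclideanLin Rᵀ v) (-toEuclideanLin Rᵀ p) := by
  refine inv_eq_left_inv ?_
  rw [se23_mul, hR, add_neg_cancel, add_neg_cancel, se23_one_zero_zero]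

def upperBlocks (M : Matrix (Fin 3) (Fin 3) ℝ) (a b : V3) : Matrix (Fin 5) (Fin 5) ℝ :=
  !![M 0 0, M 0 1, M 0 2, a 0, b 0;
     M 1 0, M 1 1, M 1 2, a 1, b 1;
     M 2 0, M 2 1, M 2 2, a 2, b 2;
     0, 0, 0, 0, 0;
     0, 0, 0, 0, 0]

theorem wedge_eq_upperBlocks (ξp ξv ξR : V3) : wedge ξp ξv ξR = upperBlocks (skew ξR) ξv ξp :=
  rfl

theorem upperBlocks_mul_upperBlocks (M N : Matrix (Fin 3) (Fin 3) ℝ) (a b c d : V3) :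
    upperBlocks M a b * upperBlocks N c d
      = upperBlocks (M * N) (toEuclideanLin M c) (toEuclideanLin M d) := by
  ext i j
  fin_cases i <;> fin_cases j <;>
    simp [upperBlocks, mul_apply, Fin.sum_univ_succ, mulVec, dotProduct]

theorem wedge_pow_succ (ξp ξv ξR : V3) (n : ℕ) :
    wedge ξp ξv ξR ^ (n + 1) = upperBlocks (skew ξR ^ (n + 1))
      (toEuclideanLin (skew ξR ^ n) ξv) (toEuclideanLin (skew ξR ^ n) ξp) := by
  induction n with
  | zero => simp [wedge_eq_upperBlocks]
  | succ n ih =>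
    rw [pow_succ', ih, wedge_eq_upperBlocks, upperBlocks_mul_upperBlocks, ← pow_succ',
      pow_succ' _ n, toLpLin_mul_same, LinearMap.comp_apply, LinearMap.comp_apply]

def positionPart : Matrix (Fin 5) (Fin 5) ℝ →ₗ[ℝ] V3 where
  toFun M := WithLp.toLp 2 fun i => M (Fin.castLE (by norm_num) i) 4
  map_add' _ _ := rfl
  map_smul' _ _ := rfl

theorem positionPart_se23 (R : Matrix (Fin 3) (Fin 3) ℝ) (v p : V3) :
    positionPart (se23 R v p) = p := by
  ext i
  fin_cases i <;> rfl

theorem positionPart_upperBlocks (M : Matrix (Fin 3) (Fin 3) ℝ) (a b : V3) :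
    positionPart (upperBlocks M a b) = b := by
  ext i
  fin_cases i <;> rfl

theorem positionPart_one : positionPart 1 = 0 := by
  ext i
  fin_cases i <;> rfl

theorem positionPart_exp_wedge (ξp ξv ξR : V3) :
    positionPart (NormedSpace.exp (wedge ξp ξv ξR)) = toEuclideanLin (Jl ξR) ξp := by
  have hexp := (hasSum_exp (wedge ξp ξv ξR)).map positionPart
    (LinearMap.continuous_of_finiteDimensional positionPart)
  have hJl : HasSum (fun n => positionPart (((n + 1)! : ℝ)⁻¹ • wedge ξp ξv ξR ^ (n + 1)))
      (toEuclideanLin (Jl ξR) ξp) := by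
    simpa only [Function.comp_def, LinearMap.flip_apply, LinearEquiv.coe_coe, map_smul,
      wedge_pow_succ, positionPart_upperBlocks] using
      (hasSum_Jl ξR).map (toEuclideanLin.toLinearMap.flip ξp)
        (LinearMap.continuous_of_finiteDimensional _)
  have h := HasSum.zero_add (f := fun n => positionPart ((n ! : ℝ)⁻¹ • wedge ξp ξv ξR ^ n)) hJl
  rw [Nat.factorial_zero, Nat.cast_one, inv_one, one_smul, pow_zero, positionPart_one,
    zero_add] at h
  exact hexp.unique h

theorem position_error_from_log_general (R Rb : Matrix (Fin 3) (Fin 3) ℝ) (v p vb pb : V3)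
    (hR : Rᵀ * R = 1) (ξp ξv ξR : V3)
    (hexp : (se23 R v p)⁻¹ * se23 Rb vb pb = NormedSpace.exp (wedge ξp ξv ξR)) :
    pb - p = Matrix.toEuclideanLin R (Matrix.toEuclideanLin (Jl ξR) ξp) ∧
    ‖pb - p‖ ≤ ‖ξp‖ := by
  have hlocal : toEuclideanLin Rᵀ (pb - p) = toEuclideanLin (Jl ξR) ξp := by
    have h := congrArg positionPart hexp
    rwa [inv_se23 hR, se23_mul, positionPart_se23, positionPart_exp_wedge, ← sub_eq_add_neg,
      ← map_sub] at h
  have hdiff : pb - p = toEuclideanLin R (toEuclideanLin (Jl ξR) ξp) := by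
    rw [← hlocal, ← LinearMap.comp_apply, ← toLpLin_mul_same, mul_eq_one_comm.mp hR, toLpLin_one,
      LinearMap.id_apply]
  refine ⟨hdiff, ?_⟩
  rw [hdiff, norm_toEuclideanLin_of_transpose_mul_self hR]
  exact norm_toEuclideanLin_Jl_le ξR ξp

/-- if `X⁻¹X̄ = exp(ξ∧)`, then `p̄ − p = R J_ℓ(ξ_R) ξ_p` and
consequently `‖p̄ − p‖ ≤ ‖ξ_p‖`. -/
theorem position_error_from_log (R Rb : Matrix (Fin 3) (Fin 3) ℝ) (v p vb pb : V3)
    (hR : Rᵀ * R = 1) (ξp ξv ξR : V3) (hξR : ξR ≠ 0)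
    (hexp : (se23 R v p)⁻¹ * se23 Rb vb pb = NormedSpace.exp (wedge ξp ξv ξR)) :
    pb - p = Matrix.toEuclideanLin R (Matrix.toEuclideanLin (Jl ξR) ξp) ∧
    ‖pb - p‖ ≤ ‖ξp‖ :=
  position_error_from_log_general R Rb v p vb pb hR ξp ξv ξR hexp
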